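/- There is a constant C such that for all n ≥ 2, |∑_{m=1}^{n} φ(m)/m − (6/π²)·n| ≤ C·log n. -/

import Mathlib

/-!
Möbius inversion of `∑_{d ∣ m} φ(d) = m` gives `φ(m)/m = ∑_{d ∣ m} μ(d)/d`, so the sum over
`m ≤ n` equals `∑_{d ≤ n} (μ(d)/d) ⌊n/d⌋`. Replacing `⌊n/d⌋` by `n/d` costs at most the harmonic
number `H_n ≤ 1 + log n`, and `n ∑_{d ≤ n} μ(d)/d²` differs from `n/ζ(2) = 6n/π²` by at most
`n ∑_{d > n} 1/d² ≤ 1`.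
-/

open Real Finset ArithmeticFunction
open scoped ArithmeticFunction.Moebius

theorem totient_div_eq_sum_moebius_div (m : ℕ) :
    (Nat.totient m : ℝ) / m = ∑ d ∈ m.divisors, (μ d : ℝ) / d := by
  rcases eq_or_ne m 0 with rfl | hm
  · simp
  have h := (sum_eq_iff_sum_mul_moebius_eq (f := fun k => (Nat.totient k : ℝ))
    (g := fun k => (k : ℝ))).mp (fun k _ => mod_cast Nat.sum_totient k) m (Nat.pos_of_ne_zero hm)
  rw [Nat.sum_divisorsAntidiagonal (fun d e => (μ d : ℝ) * e)] at h
  rw [← h, sum_div]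
  refine sum_congr rfl fun d hd => ?_
  have hd0 : (d : ℝ) ≠ 0 := Nat.cast_ne_zero.mpr (Nat.ne_of_gt (Nat.pos_of_mem_divisors hd))
  rw [Nat.cast_div (Nat.dvd_of_mem_divisors hd) hd0]
  field_simp

theorem sum_Icc_totient_div_eq_sum_moebius_div_mul (n : ℕ) :
    ∑ m ∈ Icc 1 n, (Nat.totient m : ℝ) / m = ∑ d ∈ Icc 1 n, (μ d : ℝ) / d * (n / d : ℕ) := by
  let f : ArithmeticFunction ℝ := ⟨fun d => (μ d : ℝ) / d, by simp⟩
  have h := sum_Ioc_mul_zeta_eq_sum f n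
  simp only [coe_mul_zeta_apply] at h
  rw [show Icc 1 n = Ioc 0 n from Icc_add_one_left_eq_Ioc 0 n]
  simp_rw [totient_div_eq_sum_moebius_div]
  exact h

theorem Nat.abs_cast_div_sub_div_le_one {K : Type*} [Field K] [LinearOrder K]
    [IsStrictOrderedRing K] [FloorSemiring K] (n d : ℕ) :
    |((n / d : ℕ) : K) - n / d| ≤ 1 := by
  rw [← Nat.floor_div_eq_div (K := K), abs_sub_comm,
    abs_of_nonneg (sub_nonneg.mpr (Nat.floor_le (by positivity)))]
  exact (sub_lt_iff_lt_add'.mpr (Nat.lt_floor_add_one _)).le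

theorem abs_sum_Icc_div_mul_natDiv_sub_div_le_harmonic {g : ℕ → ℝ} (hg : ∀ d, |g d| ≤ 1)
    (n : ℕ) : |∑ d ∈ Icc 1 n, g d / d * ((n / d : ℕ) - n / d)| ≤ harmonic n := by
  rw [harmonic_eq_sum_Icc, Rat.cast_sum]
  refine (abs_sum_le_sum_abs _ _).trans (sum_le_sum fun d hd => ?_)
  have hd : (0 : ℝ) < d := by exact_mod_cast (mem_Icc.mp hd).1
  rw [abs_mul, abs_div, abs_of_pos hd, Rat.cast_inv, Rat.cast_natCast, ← one_div]
  exact (mul_le_mul (div_le_div_of_nonneg_right (hg d) hd.le)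
    (Nat.abs_cast_div_sub_div_le_one n d) (abs_nonneg _) (by positivity)).trans_eq (mul_one _)

theorem hasSum_moebius_div_sq : HasSum (fun d : ℕ => (μ d : ℝ) / d ^ 2) (6 / π ^ 2) := by
  have h2 : 1 < (2 : ℂ).re := by norm_num
  have hL : LSeries (fun n => (μ n : ℂ)) 2 = ((6 / π ^ 2 : ℝ) : ℂ) := by
    have h := LSeries_zeta_mul_Lseries_moebius h2
    rw [LSeries_zeta_eq_riemannZeta h2, riemannZeta_two] at h
    have hπ : (π : ℂ) ≠ 0 := Complex.ofReal_ne_zero.mpr pi_ne_zero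
    push_cast
    field_simp at h ⊢
    linear_combination h
  have hs := (LSeriesSummable_moebius_iff.mpr h2).LSeriesHasSum
  rw [LSeriesHasSum, hL] at hs
  refine Complex.hasSum_ofReal.mp (hs.congr_fun fun d => ?_)
  rcases eq_or_ne d 0 with rfl | hd
  · simp
  · rw [LSeries.term_of_ne_zero hd, Complex.cpow_ofNat]
    push_cast
    rfl

theorem tsum_inv_sq_nat_add_succ_le {n : ℕ} (hn : n ≠ 0) :
    ∑' k : ℕ, (((k + (n + 1) : ℕ) : ℝ) ^ 2)⁻¹ ≤ (n : ℝ)⁻¹ := by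
  refine Real.tsum_le_of_sum_range_le (fun _ => by positivity) fun N => ?_
  rw [range_eq_Ico, sum_Ico_add' (fun i : ℕ => ((i : ℝ) ^ 2)⁻¹), zero_add,
    ← add_assoc, Ico_add_one_add_one_eq_Ioc]
  exact (sum_Ioc_inv_sq_le_sub hn (by omega)).trans (sub_le_self _ (by positivity))

theorem abs_sub_sum_range_le_of_hasSum_of_abs_le_inv_sq {f : ℕ → ℝ} {a : ℝ} (hf : HasSum f a)
    (hle : ∀ d ≠ 0, |f d| ≤ ((d : ℝ) ^ 2)⁻¹) {n : ℕ} (hn : n ≠ 0) :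
    |a - ∑ d ∈ range (n + 1), f d| ≤ (n : ℝ)⁻¹ := by
  have hg : Summable fun k : ℕ => (((k + (n + 1) : ℕ) : ℝ) ^ 2)⁻¹ :=
    (summable_nat_add_iff (f := fun i : ℕ => ((i : ℝ) ^ 2)⁻¹) (n + 1)).mpr
      (Real.summable_nat_pow_inv.mpr one_lt_two)
  have hsplit := hf.summable.sum_add_tsum_nat_add (n + 1)
  rw [hf.tsum_eq] at hsplit
  rw [← hsplit, add_sub_cancel_left]
  exact (tsum_of_norm_bounded (f := fun k => f (k + (n + 1))) hg.hasSum
    fun k => hle _ (by omega)).trans (tsum_inv_sq_nat_add_succ_le hn)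

theorem abs_sub_sum_Icc_moebius_div_sq_le {n : ℕ} (hn : n ≠ 0) :
    |6 / π ^ 2 - ∑ d ∈ Icc 1 n, (μ d : ℝ) / d ^ 2| ≤ (n : ℝ)⁻¹ := by
  have h := abs_sub_sum_range_le_of_hasSum_of_abs_le_inv_sq hasSum_moebius_div_sq
    (fun d _ => ?_) hn
  · rwa [range_eq_Ico, sum_eq_sum_Ico_succ_bot (by omega), Ico_add_one_right_eq_Icc,
      Nat.cast_zero, zero_pow two_ne_zero, div_zero, zero_add] at h
  · rw [abs_div, abs_of_nonneg (by positivity : (0 : ℝ) ≤ (d : ℝ) ^ 2), div_eq_mul_inv]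
    exact mul_le_of_le_one_left (by positivity) (mod_cast abs_moebius_le_one)

theorem totient_sum_asymptotic :
    ∃ C : ℝ, ∀ n : ℕ, 2 ≤ n →
      |(∑ m ∈ Finset.Icc 1 n, (Nat.totient m : ℝ) / m) - (6 / π ^ 2) * n| ≤
        C * Real.log n := by
  refine ⟨4, fun n hn => ?_⟩
  have hn0 : (0 : ℝ) < n := by positivity
  have hsplit : ∀ d : ℕ, (μ d : ℝ) / d * (n / d : ℕ)
      = (μ d : ℝ) / d * ((n / d : ℕ) - n / d) + n * ((μ d : ℝ) / d ^ 2) := fun d => by ring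
  rw [sum_Icc_totient_div_eq_sum_moebius_div_mul, sum_congr rfl fun d _ => hsplit d,
    sum_add_distrib, ← mul_sum]
  have hfloor := abs_sum_Icc_div_mul_natDiv_sub_div_le_harmonic
    (g := fun d => (μ d : ℝ)) (fun d => mod_cast abs_moebius_le_one) n
  have htail := abs_sub_sum_Icc_moebius_div_sq_le (n := n) (by omega)
  have hlog : 2 / 3 < Real.log n :=
    lt_of_lt_of_le (by linarith [Real.log_two_gt_d9]) (Real.log_le_log two_pos (mod_cast hn))
  calc _ = |∑ d ∈ Icc 1 n, (μ d : ℝ) / d * ((n / d : ℕ) - n / d)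
          - n * (6 / π ^ 2 - ∑ d ∈ Icc 1 n, (μ d : ℝ) / d ^ 2)| := by
          congr 1; ring
    _ ≤ harmonic n + n * (n : ℝ)⁻¹ := by
        grw [abs_sub, abs_mul, abs_of_pos hn0, hfloor, htail]
    _ ≤ (1 + Real.log n) + 1 := by
        grw [harmonic_le_one_add_log, mul_inv_cancel₀ hn0.ne']
    _ ≤ 4 * Real.log n := by linarith
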